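/- arXiv:1111.1379 — 2 statements merged into one kernel-verified Lean document; each statement's English description precedes it below -/
import Mathlib

section
/- Let P be a nonconstant polynomial over ℂ. Then every zero of the derivative P' lies in the convex hull of the set of zeros of P. -/
open Polynomial

theorem rootSet_self_eq_setOf_eval_eq_zero {R : Type*} [CommRing R] [IsDomain R] {P : R[X]}
    (hP : P ≠ 0) : P.rootSet R = {w : R | P.eval w = 0} := by
  ext w
  simp [mem_rootSet, hP]

/-- Gauss–Lucas theorem: every zero of `P'` lies in the convex hull of the zeros of `P`. -/
theorem stmt_2 (P : Polynomial ℂ) (hP : 0 < P.natDegree) (z : ℂ)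
    (hz : P.derivative.eval z = 0) :
    z ∈ convexHull ℝ {w : ℂ | P.eval w = 0} := by
  have hP' : P.derivative ≠ 0 := derivative_eq_zero.not.mpr hP.ne'
  rw [← rootSet_self_eq_setOf_eval_eq_zero (ne_zero_of_natDegree_gt hP)]
  refine rootSet_derivative_subset_convexHull_rootSet (natDegree_pos_iff_degree_pos.mp hP) ?_
  rw [rootSet_self_eq_setOf_eval_eq_zero hP']
  exact hz
end

section
/- Let r ≥ 1, k ≥ 3 be integers, ℓ = k + r. Define f̃_n(z) = (n^{(k−1)ℓ}/(k! ℓ^k)) (z^ℓ − 1/n^ℓ)^k − z^ℓ/(ℓ(ℓ−1)⋯(r+1)). Then there exists a constant C₁ ∈ (0, ∞) such that for all sufficiently large n, every zero z of f̃_n in the unit disc satisfies |z| ≤ C₁/n. -/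
/-!
Writing `w = n z`, the zero set of `f̃_n` is `n⁻¹` times the zero set of the single polynomial
`p(w) = (w^ℓ - 1)^k / (k! ℓ^k) - w^ℓ r!/ℓ!`, which does not depend on `n`. Since `p(0) ≠ 0`, `p` is
a nonzero polynomial, so its finitely many roots lie in a disc of some radius `C₁`.
-/

open Polynomial

theorem Polynomial.exists_pos_forall_isRoot_norm_le {K : Type*} [NormedField K] {p : K[X]}
    (hp : p ≠ 0) : ∃ M : ℝ, 0 < M ∧ ∀ w, p.IsRoot w → ‖w‖ ≤ M := by
  obtain ⟨M, hM⟩ := ((finite_setOfPred_isRoot hp).image norm).bddAbove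
  exact ⟨max M 1, by positivity, fun w hw => (hM ⟨w, hw, rfl⟩).trans (le_max_left _ _)⟩

theorem Polynomial.C_mul_X_pow_sub_one_pow_sub_C_mul_X_pow_ne_zero {R : Type*} [CommRing R]
    {a : R} (ha : a ≠ 0) (b : R) {ℓ : ℕ} (hℓ : ℓ ≠ 0) (k : ℕ) :
    C a * (X ^ ℓ - 1) ^ k - C b * X ^ ℓ ≠ 0 := by
  intro h
  have h0 := congrArg (eval 0) h
  simp only [eval_sub, eval_mul, eval_C, eval_pow, eval_X, eval_one, zero_pow hℓ, zero_sub,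
    mul_zero, sub_zero, eval_zero] at h0
  exact ha ((isUnit_one.neg.pow k).mul_left_eq_zero.mp h0)

theorem div_mul_sub_inv_pow_pow_sub_div_eq_eval {K : Type*} [Field K] {n : K} (hn : n ≠ 0)
    (z A B : K) {k : ℕ} (hk : k ≠ 0) (ℓ : ℕ) :
    n ^ ((k - 1) * ℓ) / A * (z ^ ℓ - 1 / n ^ ℓ) ^ k - z ^ ℓ / B =
      (C A⁻¹ * (X ^ ℓ - 1) ^ k - C B⁻¹ * X ^ ℓ).eval (n * z) / n ^ ℓ := by
  obtain ⟨j, rfl⟩ := Nat.exists_eq_add_one_of_ne_zero hk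
  have hsub : z ^ ℓ - 1 / n ^ ℓ = ((n * z) ^ ℓ - 1) / n ^ ℓ := by
    rw [mul_pow]; field_simp
  simp only [eval_sub, eval_mul, eval_C, eval_pow, eval_X, eval_one, Nat.add_sub_cancel, hsub,
    div_pow, ← pow_mul]
  field_simp
  ring

theorem stmt_13_general (r k : ℕ) (hk : 3 ≤ k) (ℓ : ℕ) (hℓ : ℓ = k + r)
    (g : ℕ → ℂ → ℂ)
    (hg : ∀ n : ℕ, ∀ z : ℂ, g n z =
      ((n : ℂ) ^ ((k - 1) * ℓ) / ((Nat.factorial k : ℂ) * (ℓ : ℂ) ^ k)) *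
          (z ^ ℓ - 1 / (n : ℂ) ^ ℓ) ^ k -
        z ^ ℓ / ((Nat.factorial ℓ : ℂ) / (Nat.factorial r : ℂ))) :
    ∃ C₁ : ℝ, 0 < C₁ ∧ ∃ N : ℕ, ∀ n : ℕ, N ≤ n → ∀ z : ℂ, ‖z‖ < 1 → g n z = 0 →
      ‖z‖ ≤ C₁ / n := by
  have hA : ((Nat.factorial k : ℂ) * (ℓ : ℂ) ^ k)⁻¹ ≠ 0 :=
    inv_ne_zero (by simp [Nat.factorial_ne_zero]; omega)
  obtain ⟨M, hM, hroots⟩ := exists_pos_forall_isRoot_norm_le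
    (C_mul_X_pow_sub_one_pow_sub_C_mul_X_pow_ne_zero hA
      ((Nat.factorial ℓ : ℂ) / Nat.factorial r)⁻¹ (by omega : ℓ ≠ 0) k)
  refine ⟨M, hM, 1, fun n hn z _ hz => ?_⟩
  have hn0 : (n : ℂ) ≠ 0 := Nat.cast_ne_zero.mpr (by omega)
  rw [hg, div_mul_sub_inv_pow_pow_sub_div_eq_eval hn0 z _ _ (by omega : k ≠ 0),
    div_eq_zero_iff] at hz
  have hnz := hroots _ (hz.resolve_right (pow_ne_zero _ hn0))
  rw [norm_mul, Complex.norm_natCast] at hnz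
  rw [le_div_iff₀ (by exact_mod_cast hn), mul_comm]
  exact hnz

/-- For `f̃_n(z) = (n^{(k-1)ℓ}/(k! ℓ^k))(z^ℓ - 1/n^ℓ)^k - z^ℓ/(ℓ(ℓ-1)⋯(r+1))` with
`ℓ = k + r`, there is `C₁ > 0` such that for all sufficiently large `n`, every zero of
`f̃_n` in the unit disc satisfies `|z| ≤ C₁/n`. -/
theorem stmt_13 (r k : ℕ) (hr : 1 ≤ r) (hk : 3 ≤ k) (ℓ : ℕ) (hℓ : ℓ = k + r)
    (g : ℕ → ℂ → ℂ)
    (hg : ∀ n : ℕ, ∀ z : ℂ, g n z =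
      ((n : ℂ) ^ ((k - 1) * ℓ) / ((Nat.factorial k : ℂ) * (ℓ : ℂ) ^ k)) *
          (z ^ ℓ - 1 / (n : ℂ) ^ ℓ) ^ k -
        z ^ ℓ / ((Nat.factorial ℓ : ℂ) / (Nat.factorial r : ℂ))) :
    ∃ C₁ : ℝ, 0 < C₁ ∧ ∃ N : ℕ, ∀ n : ℕ, N ≤ n → ∀ z : ℂ, ‖z‖ < 1 → g n z = 0 →
      ‖z‖ ≤ C₁ / n :=
  stmt_13_general r k hk ℓ hℓ g hg
end
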